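/- Let H be a locally semicomplete digraph with no symmetric arcs, let C: v_1→v_2→…→v_k→v_1 (k ≥ 3) be an induced directed cycle of H, and let x be a vertex of H not on C such that v_1→x and v_k does not dominate x. Then H contains an induced subdigraph isomorphic to H1(m), to H2(m), or to the converse of H2(m), for some integer m with 3 ≤ m ≤ k. -/

import Mathlib

/-- Arc relation of the digraph `H1(m)` on vertices `{1, …, m+1} ⊆ ℕ`: the directed
cycle `1 → 2 → … → m → 1` together with the arcs `m → m+1` and `m+1 → 1`. -/
def H1Arc (m : ℕ) : ℕ → ℕ → Prop := fun a b =>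
  (1 ≤ a ∧ a < m ∧ b = a + 1) ∨ (a = m ∧ b = 1) ∨ (a = m ∧ b = m + 1) ∨ (a = m + 1 ∧ b = 1)

/-- Arc relation of the digraph `H2(m)` on vertices `{1, …, m+1} ⊆ ℕ`: the directed
cycle `1 → 2 → … → m → 1` together with the arcs `m → m+1`, `m+1 → 1` and `m+1 → 2`. -/
def H2Arc (m : ℕ) : ℕ → ℕ → Prop := fun a b =>
  (1 ≤ a ∧ a < m ∧ b = a + 1) ∨ (a = m ∧ b = 1) ∨ (a = m ∧ b = m + 1) ∨
    (a = m + 1 ∧ b = 1) ∨ (a = m + 1 ∧ b = 2)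

/-!
Walking around `C` from `v_1` to `v_k` we meet `v_i → x` with `v_{i+1} ↛ x`; as `x` and `v_{i+1}`
are out-neighbours of `v_i`, `x → v_{i+1}`. So `x` has both in- and out-neighbours on `C`.
Renumber `C` as `u_0 → u_1 → ⋯` so that `x → u_0` and `u_d → x` with `d` minimal (a chordless ear):
`x, u_0, …, u_d` is an induced `(d + 2)`-cycle. If `d = k - 1` it is `C` plus `x`, a copy of
`H1(k)`. Otherwise let `y = u_{d+1}`. If `d ≤ k - 3`, then `y → x` (both are out-neighbours of
`u_d`, and `x → y` would make `u_0` and `y` adjacent), which gives `H1(d + 2)`. If `d = k - 2`,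
then `y → u_0`, so `x` and `y` are adjacent as in-neighbours of `u_0`: `y → x` gives `H2(d + 2)`,
and `x → y` gives the converse of `H2(d + 2)`, by the same argument in the converse digraph with
`C` reflected at the ear.
-/

theorem Fin.eq_add_one_iff_val {n : ℕ} [NeZero n] (i j : Fin n) :
    j = i + 1 ↔ (j : ℕ) = i + 1 ∨ (i : ℕ) + 1 = n ∧ (j : ℕ) = 0 := by
  obtain ⟨n, rfl⟩ := Nat.exists_eq_succ_of_ne_zero (NeZero.ne n)
  rw [Fin.ext_iff, Fin.val_add_one]
  have := i.isLt
  have := j.isLt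
  split_ifs with h
  · simp only [h, Fin.val_last, true_and]
    omega
  · have : (i : ℕ) ≠ n := fun h' => h (Fin.ext h')
    omega

section
variable {V : Type} {A : V → V → Prop}

def IsInducedPath (A : V → V → Prop) {n : ℕ} (P : Fin n → V) : Prop :=
  Function.Injective P ∧ ∀ i j, A (P i) (P j) ↔ (j : ℕ) = i + 1

def IsInducedCycle (A : V → V → Prop) {n : ℕ} [NeZero n] (z : Fin n → V) : Prop :=
  Function.Injective z ∧ ∀ i j, A (z i) (z j) ↔ j = i + 1

theorem IsInducedCycle.arc_iff {n : ℕ} [NeZero n] {z : Fin n → V} (hz : IsInducedCycle A z)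
    (i j : Fin n) : A (z i) (z j) ↔ (j : ℕ) = i + 1 ∨ (i : ℕ) + 1 = n ∧ (j : ℕ) = 0 := by
  rw [hz.2, Fin.eq_add_one_iff_val]

theorem IsInducedCycle.comp_add_left {n : ℕ} [NeZero n] {z : Fin n → V}
    (hz : IsInducedCycle A z) (s : Fin n) : IsInducedCycle A (fun c => z (s + c)) :=
  ⟨hz.1.comp (add_right_injective s), fun i j => by rw [hz.2, add_assoc, add_right_inj]⟩

theorem IsInducedCycle.isInducedPath_comp_castLE {n k : ℕ} [NeZero k] {u : Fin k → V}
    (hu : IsInducedCycle A u) (h : n < k) : IsInducedPath A (u ∘ Fin.castLE h.le) := by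
  refine ⟨hu.1.comp (Fin.castLE_injective _), fun i j => ?_⟩
  simp only [Function.comp_apply, hu.arc_iff, Fin.val_castLE]
  omega

theorem IsInducedPath.isInducedCycle_cons {n : ℕ} {P : Fin (n + 1) → V} (hP : IsInducedPath A P)
    {x : V} (hx : x ∉ Set.range P) (hxx : ¬ A x x) (hout : ∀ i, A x (P i) ↔ (i : ℕ) = 0)
    (hin : ∀ i, A (P i) x ↔ (i : ℕ) = n) : IsInducedCycle A (Fin.cons x P : Fin (n + 2) → V) := by
  refine ⟨Fin.cons_injective_of_injective hx hP.1, fun i j => ?_⟩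
  rw [Fin.eq_add_one_iff_val]
  cases i using Fin.cases <;> cases j using Fin.cases <;>
    simp only [Fin.cons_zero, Fin.cons_succ, Fin.val_zero, Fin.val_succ, hP.2, hout, hin, hxx,
      and_true, false_iff] <;>
    omega

theorem exists_snoc_embedding {m : ℕ} {R : ℕ → ℕ → Prop} {z : Fin m → V} {y : V}
    (hz : Function.Injective z) (hy : y ∉ Set.range z)
    (hcyc : ∀ i j : Fin m, R (i + 1) (j + 1) ↔ A (z i) (z j))
    (hin : ∀ i : Fin m, R (i + 1) (m + 1) ↔ A (z i) y)
    (hout : ∀ j : Fin m, R (m + 1) (j + 1) ↔ A y (z j)) (hlast : ¬ R (m + 1) (m + 1))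
    (hyy : ¬ A y y) :
    ∃ φ : Fin (m + 1) → V, Function.Injective φ ∧
      ∀ p q : Fin (m + 1), R ((p : ℕ) + 1) ((q : ℕ) + 1) ↔ A (φ p) (φ q) := by
  refine ⟨Fin.snoc z y, Fin.snoc_injective_of_injective hz hy, fun p q => ?_⟩
  cases p using Fin.lastCases <;> cases q using Fin.lastCases <;>
    simp only [Fin.snoc_castSucc, Fin.snoc_last, Fin.val_castSucc, Fin.val_last, hcyc, hin, hout,
      hlast, hyy]

theorem IsInducedCycle.exists_H1_embedding {m : ℕ} [NeZero m] {z : Fin m → V}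
    (hz : IsInducedCycle A z) {y : V} (hy : y ∉ Set.range z) (hyy : ¬ A y y)
    (hin : ∀ i : Fin m, A (z i) y ↔ (i : ℕ) + 1 = m)
    (hout : ∀ j : Fin m, A y (z j) ↔ (j : ℕ) = 0) :
    ∃ φ : Fin (m + 1) → V, Function.Injective φ ∧
      ∀ p q : Fin (m + 1), H1Arc m ((p : ℕ) + 1) ((q : ℕ) + 1) ↔ A (φ p) (φ q) := by
  have := NeZero.pos m
  refine exists_snoc_embedding hz.1 hy (fun i j => ?_) (fun i => ?_) (fun j => ?_) ?_ hyy
  · have := j.isLt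
    simp only [H1Arc, hz.arc_iff]
    omega
  all_goals simp only [H1Arc, hin, hout, and_true, true_and]; omega

theorem IsInducedCycle.exists_H2_embedding {m : ℕ} [NeZero m] (hm : 2 ≤ m) {z : Fin m → V}
    (hz : IsInducedCycle A z) {y : V} (hy : y ∉ Set.range z) (hyy : ¬ A y y)
    (hin : ∀ i : Fin m, A (z i) y ↔ (i : ℕ) + 1 = m)
    (hout : ∀ j : Fin m, A y (z j) ↔ (j : ℕ) = 0 ∨ (j : ℕ) = 1) :
    ∃ φ : Fin (m + 1) → V, Function.Injective φ ∧
      ∀ p q : Fin (m + 1), H2Arc m ((p : ℕ) + 1) ((q : ℕ) + 1) ↔ A (φ p) (φ q) := by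
  refine exists_snoc_embedding hz.1 hy (fun i j => ?_) (fun i => ?_) (fun j => ?_) ?_ hyy
  · have := j.isLt
    simp only [H2Arc, hz.arc_iff]
    omega
  all_goals simp only [H2Arc, hin, hout, and_true, true_and]; omega

theorem IsInducedCycle.comp_sub_left {n : ℕ} [NeZero n] {z : Fin n → V}
    (hz : IsInducedCycle A z) (s : Fin n) : IsInducedCycle (flip A) (fun c => z (s - c)) :=
  ⟨hz.1.comp sub_right_injective, fun i j => by
    rw [flip, hz.2, sub_add, sub_right_inj, eq_sub_iff_add_eq, eq_comm]⟩

theorem exists_arc_to_and_from_cycle {k : ℕ} [NeZero k] {v : Fin k → V} (hv : IsInducedCycle A v)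
    (hloc_out : ∀ x y z : V, y ≠ z → A x y → A x z → (A y z ∨ A z y))
    {x : V} (hx : ∀ i, v i ≠ x) (h1 : A (v 0) x)
    (h2 : ¬ A (v ⟨k - 1, Nat.sub_one_lt (NeZero.ne k)⟩) x) :
    ∃ p q : Fin k, A x (v p) ∧ A (v q) x := by
  by_contra! hno
  have hstep : ∀ i, A (v i) x → A (v (i + 1)) x := fun i hi =>
    (hloc_out (v i) (v (i + 1)) x (hx _) ((hv.2 i (i + 1)).2 rfl) hi).resolve_right
      (fun h => hno _ _ h hi)
  have hall : ∀ n (hn : n < k), A (v ⟨n, hn⟩) x := by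
    intro n
    induction n with
    | zero => exact fun _ => h1
    | succ n ih =>
      intro hn
      convert hstep _ (ih (by omega)) using 2
      exact Fin.ext (Fin.val_add_one_of_lt' (i := ⟨n, by omega⟩) hn).symm
  exact h2 (hall _ _)

def IsChordlessEar (A : V → V → Prop) {k : ℕ} (u : Fin k → V) (x : V) (d : ℕ) : Prop :=
  (∀ i : Fin k, (i : ℕ) ≤ d → (A x (u i) ↔ (i : ℕ) = 0)) ∧
    (∀ i : Fin k, (i : ℕ) ≤ d → (A (u i) x ↔ (i : ℕ) = d))

theorem exists_chordless_ear {k : ℕ} [NeZero k] {v : Fin k → V} {x : V}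
    (hasym : ∀ p q : V, A p q → ¬ A q p) (hear : ∃ p q : Fin k, A x (v p) ∧ A (v q) x) :
    ∃ p : Fin k, ∃ d : ℕ, 1 ≤ d ∧ d < k ∧ IsChordlessEar A (fun c => v (p + c)) x d := by
  classical
  have h : ∃ d : ℕ, ∃ p q : Fin k, A x (v p) ∧ A (v q) x ∧ ((q - p : Fin k) : ℕ) = d := by
    obtain ⟨p, q, hp, hq⟩ := hear
    exact ⟨_, p, q, hp, hq, rfl⟩
  obtain ⟨p, q, hp, hq, hpq⟩ := Nat.find_spec h
  set d := Nat.find h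
  have hmin : ∀ p' q', A x (v p') → A (v q') x → d ≤ ((q' - p' : Fin k) : ℕ) :=
    fun p' q' h1 h2 => Nat.find_min' h ⟨p', q', h1, h2, rfl⟩
  have hd : 1 ≤ d := by
    by_contra h0
    have : q = p := sub_eq_zero.1 (Fin.ext (by rw [hpq, Fin.val_zero]; omega))
    exact hasym _ _ hp (this ▸ hq)
  refine ⟨p, d, hd, hpq ▸ (q - p).isLt, fun i hi => ⟨fun hxi => ?_, fun hi0 => ?_⟩,
    fun i hi => ⟨fun hix => ?_, fun hid => ?_⟩⟩ <;> dsimp only at *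
  · have := hmin _ _ hxi hq
    rw [sub_add_eq_sub_sub, Fin.sub_val_of_le (Fin.le_iff_val_le_val.2 (hpq ▸ hi)), hpq] at this
    omega
  · rwa [show i = 0 from Fin.ext hi0, add_zero]
  · have := hmin _ _ hp hix
    rw [add_sub_cancel_left] at this
    omega
  · rwa [show i = q - p from Fin.ext (hid.trans hpq.symm), add_sub_cancel]

section Ear
variable {k d : ℕ} {u : Fin k → V} {x : V}

theorem IsChordlessEar.reflect (he : IsChordlessEar A u x d) (hdk : d < k) :
    IsChordlessEar (flip A) (fun c => u (⟨d, hdk⟩ - c)) x d := by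
  have hval : ∀ i : Fin k, (i : ℕ) ≤ d → ((⟨d, hdk⟩ - i : Fin k) : ℕ) = d - i := fun i hi =>
    Fin.sub_val_of_le (Fin.le_iff_val_le_val.2 hi)
  refine ⟨fun i hi => ?_, fun i hi => ?_⟩ <;> simp only [flip]
  · rw [he.2 _ (by rw [hval i hi]; omega), hval i hi]
    omega
  · rw [he.1 _ (by rw [hval i hi]; omega), hval i hi]
    omega

def earCycle (u : Fin k → V) (x : V) (h : d + 1 < k) : Fin (d + 2) → V :=
  Fin.cons x (u ∘ Fin.castLE h.le)

theorem IsChordlessEar.isInducedCycle_earCycle [NeZero k] (he : IsChordlessEar A u x d)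
    (hu : IsInducedCycle A u) (hx : x ∉ Set.range u) (hxx : ¬ A x x) (h : d + 1 < k) :
    IsInducedCycle A (earCycle u x h) :=
  (hu.isInducedPath_comp_castLE h).isInducedCycle_cons (fun ⟨_, hi⟩ => hx ⟨_, hi⟩) hxx
    (fun i => he.1 _ (Nat.lt_succ_iff.1 i.isLt)) (fun i => he.2 _ (Nat.lt_succ_iff.1 i.isLt))

theorem not_mem_range_earCycle (hu : Function.Injective u) (hx : x ∉ Set.range u)
    (h : d + 1 < k) : u ⟨d + 1, h⟩ ∉ Set.range (earCycle u x h) := by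
  rintro ⟨i, hi⟩
  cases i using Fin.cases with
  | zero => exact hx ⟨_, hi.symm⟩
  | succ i =>
    have := congrArg Fin.val (hu hi)
    simp only [Fin.val_castLE] at this
    omega

theorem IsInducedCycle.arc_earCycle_iff [NeZero k] (hu : IsInducedCycle A u)
    (hasym : ∀ p q : V, A p q → ¬ A q p) (h : d + 1 < k)
    (hyx : A (u ⟨d + 1, h⟩) x) :
    (∀ i, A (earCycle u x h i) (u ⟨d + 1, h⟩) ↔ (i : ℕ) + 1 = d + 2) ∧
      (∀ j, A (u ⟨d + 1, h⟩) (earCycle u x h j) ↔ (j : ℕ) = 0 ∨ d + 2 = k ∧ (j : ℕ) = 1) := by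
  refine ⟨Fin.cases ?_ (fun i => ?_), Fin.cases ?_ (fun j => ?_)⟩ <;>
    simp only [earCycle, Fin.cons_zero, Fin.cons_succ, Function.comp_apply, hu.arc_iff,
      Fin.val_castLE, Fin.val_zero, Fin.val_succ, hyx, hasym _ _ hyx, false_iff, true_or]
  · omega
  · omega
  · have := j.isLt
    omega

theorem IsChordlessEar.exists_H2_embedding [NeZero k] (he : IsChordlessEar A u x d)
    (hasym : ∀ p q : V, A p q → ¬ A q p) (hu : IsInducedCycle A u) (hx : x ∉ Set.range u)
    (hdk : d + 2 = k) (hyx : A (u ⟨d + 1, by omega⟩) x) :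
    ∃ φ : Fin (d + 2 + 1) → V, Function.Injective φ ∧
      ∀ p q : Fin (d + 2 + 1), H2Arc (d + 2) ((p : ℕ) + 1) ((q : ℕ) + 1) ↔ A (φ p) (φ q) := by
  have h : d + 1 < k := by omega
  obtain ⟨hin, hout⟩ := hu.arc_earCycle_iff hasym h hyx
  exact (he.isInducedCycle_earCycle hu hx (fun hxx => hasym _ _ hxx hxx) h).exists_H2_embedding
    (by omega) (not_mem_range_earCycle hu.1 hx h) (fun hyy => hasym _ _ hyy hyy) hin
    (fun j => by rw [hout]; omega)

theorem IsChordlessEar.exists_H1_embedding [NeZero k] (he : IsChordlessEar A u x d)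
    (hloc_out : ∀ x y z : V, y ≠ z → A x y → A x z → (A y z ∨ A z y))
    (hasym : ∀ p q : V, A p q → ¬ A q p) (hu : IsInducedCycle A u) (hx : x ∉ Set.range u)
    (hd : 1 ≤ d) (hdk : d + 3 ≤ k) :
    ∃ φ : Fin (d + 2 + 1) → V, Function.Injective φ ∧
      ∀ p q : Fin (d + 2 + 1), H1Arc (d + 2) ((p : ℕ) + 1) ((q : ℕ) + 1) ↔ A (φ p) (φ q) := by
  have h : d + 1 < k := by omega
  have hyx : A (u ⟨d + 1, h⟩) x := by
    refine (hloc_out (u ⟨d, by omega⟩) _ x (fun hy => hx ⟨_, hy⟩) ((hu.arc_iff _ _).2 (Or.inl rfl))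
      ((he.2 _ le_rfl).2 rfl)).resolve_right fun hxy => ?_
    -- `x` would dominate both `u 0` and `u (d + 1)`, which are not adjacent
    have h0 : u 0 ≠ u ⟨d + 1, h⟩ := hu.1.ne (by simp [Fin.ext_iff])
    rcases hloc_out x _ _ h0 ((he.1 0 (Nat.zero_le _)).2 rfl) hxy with h' | h' <;>
      rw [hu.arc_iff] at h' <;> simp only [Fin.val_zero] at h' <;> omega
  obtain ⟨hin, hout⟩ := hu.arc_earCycle_iff hasym h hyx
  exact (he.isInducedCycle_earCycle hu hx (fun hxx => hasym _ _ hxx hxx) h).exists_H1_embedding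
    (not_mem_range_earCycle hu.1 hx h) (fun hyy => hasym _ _ hyy hyy) hin
    (fun j => by rw [hout]; omega)

theorem IsChordlessEar.exists_pattern [NeZero k] (he : IsChordlessEar A u x d)
    (hloc_out : ∀ x y z : V, y ≠ z → A x y → A x z → (A y z ∨ A z y))
    (hloc_in : ∀ x y z : V, y ≠ z → A y x → A z x → (A y z ∨ A z y))
    (hasym : ∀ p q : V, A p q → ¬ A q p) (hk : 3 ≤ k) (hu : IsInducedCycle A u)
    (hx : x ∉ Set.range u) (hd : 1 ≤ d) (hdk : d < k) :
    ∃ m : ℕ, 3 ≤ m ∧ m ≤ k ∧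
      ∃ φ : Fin (m + 1) → V, Function.Injective φ ∧
        ((∀ p q : Fin (m + 1), H1Arc m ((p : ℕ) + 1) ((q : ℕ) + 1) ↔ A (φ p) (φ q)) ∨
         (∀ p q : Fin (m + 1), H2Arc m ((p : ℕ) + 1) ((q : ℕ) + 1) ↔ A (φ p) (φ q)) ∨
         (∀ p q : Fin (m + 1), H2Arc m ((p : ℕ) + 1) ((q : ℕ) + 1) ↔ A (φ q) (φ p))) := by
  rcases (by omega : d + 1 = k ∨ d + 2 = k ∨ d + 3 ≤ k) with hd1 | hd2 | hd3
  · obtain ⟨φ, hφ, h⟩ := hu.exists_H1_embedding hx (fun hxx => hasym _ _ hxx hxx)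
      (fun i => by rw [he.2 i (by omega)]; omega) (fun j => he.1 j (by omega))
    exact ⟨k, hk, le_rfl, φ, hφ, Or.inl h⟩
  · have hy0 : A (u ⟨d + 1, by omega⟩) (u 0) := (hu.arc_iff _ _).2 (Or.inr ⟨hd2, rfl⟩)
    rcases hloc_in (u 0) _ x (fun hy => hx ⟨_, hy⟩) hy0 ((he.1 0 (Nat.zero_le _)).2 rfl)
      with hyx | hxy
    · obtain ⟨φ, hφ, h⟩ := he.exists_H2_embedding hasym hu hx hd2 hyx
      exact ⟨d + 2, by omega, by omega, φ, hφ, Or.inr (Or.inl h)⟩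
    · -- reflecting the cycle at the ear turns `x → y` into `y → x` in the converse digraph
      have hrefl : (⟨d, hdk⟩ - ⟨d + 1, by omega⟩ : Fin k) = ⟨d + 1, by omega⟩ :=
        Fin.ext ((Fin.coe_sub_iff_lt.2 (Nat.lt_succ_self d)).trans (by simp only; omega))
      obtain ⟨φ, hφ, h⟩ := (he.reflect hdk).exists_H2_embedding (fun p q => hasym q p)
        (hu.comp_sub_left _) (fun ⟨_, hi⟩ => hx ⟨_, hi⟩) hd2 (by simpa only [flip, hrefl] using hxy)
      exact ⟨d + 2, by omega, by omega, φ, hφ, Or.inr (Or.inr h)⟩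
  · obtain ⟨φ, hφ, h⟩ := he.exists_H1_embedding hloc_out hasym hu hx hd hd3
    exact ⟨d + 2, by omega, by omega, φ, hφ, Or.inl h⟩

end Ear

end

/-- If a locally semicomplete digraph `H` without symmetric arcs has an
induced directed cycle `v_1 → … → v_k → v_1` (`k ≥ 3`) and a vertex `x` off the cycle
with `v_1 → x` and not `v_k → x`, then `H` has an induced subdigraph isomorphic to
`H1(m)`, `H2(m)`, or the converse of `H2(m)` for some `3 ≤ m ≤ k`. -/
theorem stmt_15 {V : Type} (A : V → V → Prop)
    (hloc_out : ∀ x y z : V, y ≠ z → A x y → A x z → (A y z ∨ A z y))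
    (hloc_in : ∀ x y z : V, y ≠ z → A y x → A z x → (A y z ∨ A z y))
    (hasym : ∀ p q : V, A p q → ¬ A q p)
    (k : ℕ) [NeZero k] (hk : 3 ≤ k) (v : Fin k → V) (hinj : Function.Injective v)
    (hinduced : ∀ i j : Fin k, A (v i) (v j) ↔ j = i + 1)
    (x : V) (hx : ∀ i : Fin k, v i ≠ x)
    (h1 : A (v 0) x) (h2 : ¬ A (v ⟨k - 1, by omega⟩) x) :
    ∃ m : ℕ, 3 ≤ m ∧ m ≤ k ∧
      ∃ φ : Fin (m + 1) → V, Function.Injective φ ∧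
        ((∀ p q : Fin (m + 1), H1Arc m ((p : ℕ) + 1) ((q : ℕ) + 1) ↔ A (φ p) (φ q)) ∨
         (∀ p q : Fin (m + 1), H2Arc m ((p : ℕ) + 1) ((q : ℕ) + 1) ↔ A (φ p) (φ q)) ∨
         (∀ p q : Fin (m + 1), H2Arc m ((p : ℕ) + 1) ((q : ℕ) + 1) ↔ A (φ q) (φ p))) := by
  have hv : IsInducedCycle A v := ⟨hinj, hinduced⟩
  obtain ⟨p, d, hd, hdk, he⟩ :=
    exists_chordless_ear hasym (exists_arc_to_and_from_cycle hv hloc_out hx h1 h2)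
  exact he.exists_pattern hloc_out hloc_in hasym hk (hv.comp_add_left p)
    (fun ⟨_, hi⟩ => hx _ hi) hd hdk
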